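/- Any two left quotients of a product of atoms are comparable under inclusion: if I is a product of atoms and R₁ = I/x, R₂ = I/y, then R₁ ⊆ R₂ or R₂ ⊆ R₁. -/

import Mathlib

inductive Atom (α : Type*) where
  | letter (a : α) : Atom α
  | star (B : Set α) : Atom α

def Atom.lang {α : Type*} : Atom α → Set (List α)
  | .letter a => {[a], []}
  | .star B => {w | ∀ c ∈ w, c ∈ B}

def prodLang {α : Type*} : List (Atom α) → Set (List α)
  | [] => {[]}
  | A :: I => Set.image2 (· ++ ·) A.lang (prodLang I)

def quot {α : Type*} (L : Set (List α)) (u : List α) : Set (List α) :=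
  {w | u ++ w ∈ L}

/-!
Quotienting a product `A₁ ⋯ Aₙ` by a single letter `a` yields either `∅` or the product of
one of its suffixes `Aᵢ ⋯ Aₙ`: by the derivative rule `(A·L)/a = (A/a)·L ∪ L/a` (valid as
`ε ∈ A`), because `A/a` is `∅`, `{ε}` or `A` for an atom `A`. Iterating letter by letter, every
quotient `I/x` is `∅` or a suffix product. Suffixes of a list form a chain, and `prodLang` is
monotone along suffixes because every atom contains `ε`.
-/

section

variable {α : Type*}

namespace Atom

theorem nil_mem_lang (A : Atom α) : [] ∈ A.lang := by
  cases A <;> simp [Atom.lang]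

theorem quot_lang_singleton (A : Atom α) (a : α) :
    quot A.lang [a] = ∅ ∨ quot A.lang [a] = {[]} ∨ quot A.lang [a] = A.lang := by
  cases A with
  | letter b =>
    by_cases hab : a = b
    · subst hab
      right; left
      ext w
      simp [quot, Atom.lang]
    · left
      ext w
      simp [quot, Atom.lang, hab]
  | star B =>
    by_cases haB : a ∈ B
    · right; right
      ext w
      simp [quot, Atom.lang, haB]
    · left
      ext w
      simp [quot, Atom.lang, haB]

end Atom

theorem prodLang_subset_of_isSuffix {J I : List (Atom α)} (h : J <:+ I) :
    prodLang J ⊆ prodLang I := by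
  induction I with
  | nil => rw [List.suffix_nil.mp h]
  | cons A I ih =>
    rcases List.suffix_cons_iff.mp h with rfl | hJ
    · rfl
    · exact fun w hw => ⟨[], A.nil_mem_lang, w, ih hJ hw, rfl⟩

theorem quot_append (L : Set (List α)) (x y : List α) :
    quot L (x ++ y) = quot (quot L x) y := by
  ext w
  simp [quot]

@[simp]
theorem quot_empty (x : List α) : quot (∅ : Set (List α)) x = ∅ := rfl

theorem quot_image2_append_singleton {K L : Set (List α)} (hK : [] ∈ K) (a : α) :
    quot (Set.image2 (· ++ ·) K L) [a] = Set.image2 (· ++ ·) (quot K [a]) L ∪ quot L [a] := by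
  ext w
  constructor
  · rintro ⟨p, hp, q, hq, hpq⟩
    cases p with
    | nil =>
      right
      simp only [List.nil_append] at hpq
      simpa [quot, hpq] using hq
    | cons c p =>
      left
      simp only [List.cons_append, List.cons.injEq] at hpq
      obtain ⟨rfl, rfl⟩ := hpq
      exact ⟨p, hp, q, hq, rfl⟩
  · rintro (⟨p, hp, q, hq, rfl⟩ | hw)
    · exact ⟨a :: p, hp, q, hq, rfl⟩
    · exact ⟨[], hK, a :: w, hw, rfl⟩

def suffixLangs (I : List (Atom α)) : Set (Set (List α)) :=
  insert ∅ (prodLang '' {J | J <:+ I})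

theorem prodLang_mem_suffixLangs {J I : List (Atom α)} (h : J <:+ I) :
    prodLang J ∈ suffixLangs I :=
  Or.inr ⟨J, h, rfl⟩

theorem suffixLangs_mono {J I : List (Atom α)} (h : J <:+ I) : suffixLangs J ⊆ suffixLangs I := by
  rintro L (rfl | ⟨K, hK, rfl⟩)
  · exact Set.mem_insert _ _
  · exact prodLang_mem_suffixLangs (hK.trans h)

theorem subset_prodLang_of_mem_suffixLangs {I : List (Atom α)} {L : Set (List α)}
    (hL : L ∈ suffixLangs I) : L ⊆ prodLang I := by
  rcases hL with rfl | ⟨J, hJ, rfl⟩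
  · exact Set.empty_subset _
  · exact prodLang_subset_of_isSuffix hJ

theorem isChain_suffixLangs (I : List (Atom α)) : IsChain (· ⊆ ·) (suffixLangs I) := by
  rintro _ (rfl | ⟨J, hJ, rfl⟩) _ (rfl | ⟨K, hK, rfl⟩) -
  · exact Or.inl le_rfl
  · exact Or.inl (Set.empty_subset _)
  · exact Or.inr (Set.empty_subset _)
  · exact (List.suffix_or_suffix_of_suffix hJ hK).imp
      prodLang_subset_of_isSuffix prodLang_subset_of_isSuffix

theorem quot_prodLang_singleton_mem_suffixLangs (I : List (Atom α)) (a : α) :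
    quot (prodLang I) [a] ∈ suffixLangs I := by
  induction I with
  | nil => exact Or.inl (by ext w; simp [quot, prodLang])
  | cons A I ih =>
    have hsub : quot (prodLang I) [a] ⊆ prodLang I := subset_prodLang_of_mem_suffixLangs ih
    have hsuffix : I <:+ A :: I := List.suffix_cons A I
    rw [prodLang, quot_image2_append_singleton A.nil_mem_lang]
    rcases A.quot_lang_singleton a with h | h | h <;> rw [h]
    · rw [Set.image2_empty_left, Set.empty_union]
      exact suffixLangs_mono hsuffix ih
    · simp only [Set.image2_singleton_left, List.nil_append, Set.image_id']
      rw [Set.union_eq_left.mpr hsub]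
      exact prodLang_mem_suffixLangs hsuffix
    · have hsub' := hsub.trans (prodLang_subset_of_isSuffix hsuffix)
      rw [prodLang] at hsub'
      rw [Set.union_eq_left.mpr hsub']
      exact prodLang_mem_suffixLangs List.suffix_rfl

theorem quot_prodLang_mem_suffixLangs (I : List (Atom α)) (x : List α) :
    quot (prodLang I) x ∈ suffixLangs I := by
  induction x generalizing I with
  | nil => exact prodLang_mem_suffixLangs List.suffix_rfl
  | cons a x ih =>
    rw [← List.singleton_append, quot_append]
    rcases quot_prodLang_singleton_mem_suffixLangs I a with h | ⟨J, hJ, h⟩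
    · rw [h]
      exact Or.inl (quot_empty x)
    · rw [← h]
      exact suffixLangs_mono hJ (ih J)

end

/-- Any two quotients of a product of atoms are comparable under inclusion. -/
theorem quot_prodLang_comparable {α : Type*} (I : List (Atom α)) (x y : List α) :
    quot (prodLang I) x ⊆ quot (prodLang I) y ∨
      quot (prodLang I) y ⊆ quot (prodLang I) x :=
  (isChain_suffixLangs I).total (quot_prodLang_mem_suffixLangs I x)
    (quot_prodLang_mem_suffixLangs I y)
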